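/- For all n,m ≥ 1 and every data independent memory system S, every trace of S(n,m) is sequentially consistent if and only if every unambiguous trace of S(n,m) is sequentially consistent. -/

import Mathlib

/-- A memory operation: read or write. -/
inductive MemOp : Type
  | R : MemOp
  | W : MemOp
deriving DecidableEq

/-- A memory event ⟨op, proc, loc, data⟩. -/
structure MemEvent : Type where
  op : MemOp
  proc : ℕ
  loc : ℕ
  data : ℕ
deriving DecidableEq

instance : Inhabited MemEvent := ⟨⟨MemOp.R, 1, 1, 0⟩⟩

/-- A trace is a finite sequence of memory events (1-indexed via `ev`). -/
abbrev MTrace := List MemEvent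

/-- The x-th event of a trace (1-indexed). -/
def ev (τ : MTrace) (x : ℕ) : MemEvent := τ.getD (x - 1) default

/-- dom(τ) = {1, …, |τ|}. -/
def Dom (τ : MTrace) : Set ℕ := {x | 1 ≤ x ∧ x ≤ τ.length}

/-- P(τ,i): indices of events of processor i. -/
def Pset (τ : MTrace) (i : ℕ) : Set ℕ := {x | x ∈ Dom τ ∧ (ev τ x).proc = i}

/-- L(τ,j): indices of events to location j. -/
def Lset (τ : MTrace) (j : ℕ) : Set ℕ := {x | x ∈ Dom τ ∧ (ev τ x).loc = j}

/-- L^w(τ,j): indices of write events to location j. -/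
def Lw (τ : MTrace) (j : ℕ) : Set ℕ := {x | x ∈ Lset τ j ∧ (ev τ x).op = MemOp.W}

/-- L^r(τ,j): indices of read events to location j. -/
def Lr (τ : MTrace) (j : ℕ) : Set ℕ := {x | x ∈ Lset τ j ∧ (ev τ x).op = MemOp.R}

/-- A trace is unambiguous if every write event has a nonzero data value distinct
from that of every other write event to the same location. -/
def Unambiguous (τ : MTrace) : Prop :=
  ∀ j, ∀ x ∈ Lw τ j, (ev τ x).data ≠ 0 ∧
    ∀ y ∈ Lw τ j, y ≠ x → (ev τ y).data ≠ (ev τ x).data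

/-- A trace is causal if the data value of every read event is 0 or equals the data
value of some write event to the same location. -/
def Causal (τ : MTrace) : Prop :=
  ∀ j, ∀ x ∈ Lr τ j, (ev τ x).data = 0 ∨ ∃ y ∈ Lw τ j, (ev τ y).data = (ev τ x).data

/-- ⟨x,y⟩ ∈ M(τ,i): the total order on P(τ,i) given by index order. -/
def Mrel (τ : MTrace) (i : ℕ) (x y : ℕ) : Prop :=
  x ∈ Pset τ i ∧ y ∈ Pset τ i ∧ x < y

/-- A sequence of memory events (given by its length and 1-indexed access function)
is serial: each event's data value equals that of the latest write to the same
location at an index no larger than its own, and equals 0 if no such write exists. -/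
def SerialFn (len : ℕ) (e : ℕ → MemEvent) : Prop :=
  ∀ u, 1 ≤ u → u ≤ len →
    ((∀ k, 1 ≤ k → k ≤ u → ¬((e k).op = MemOp.W ∧ (e k).loc = (e u).loc)) →
       (e u).data = 0) ∧
    (∀ k, 1 ≤ k → k ≤ u → (e k).op = MemOp.W → (e k).loc = (e u).loc →
       (∀ k', k < k' → k' ≤ u → ¬((e k').op = MemOp.W ∧ (e k').loc = (e u).loc)) →
       (e u).data = (e k).data)

/-- f (with inverse g) is a permutation of {1,…,|τ|} satisfying conditions C1 and C2. -/
def IsSCWitness (τ : MTrace) (f g : ℕ → ℕ) : Prop :=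
  (∀ u ∈ Dom τ, f u ∈ Dom τ) ∧
  (∀ u ∈ Dom τ, g u ∈ Dom τ) ∧
  (∀ u ∈ Dom τ, g (f u) = u) ∧
  (∀ u ∈ Dom τ, f (g u) = u) ∧
  (∀ i u v, Mrel τ i u v → f u < f v) ∧
  SerialFn τ.length (fun x => ev τ (g x))

/-- A trace is sequentially consistent if some permutation satisfies C1 and C2. -/
def SeqConsistent (τ : MTrace) : Prop := ∃ f g, IsSCWitness τ f g

/-- A witness assigns to each trace and location a strict total order on L^w(τ,j). -/
def IsWitness (Ω : MTrace → ℕ → ℕ → ℕ → Prop) : Prop :=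
  ∀ τ j,
    (∀ x y, Ω τ j x y → x ∈ Lw τ j ∧ y ∈ Lw τ j) ∧
    (∀ x, ¬ Ω τ j x x) ∧
    (∀ x y z, Ω τ j x y → Ω τ j y z → Ω τ j x z) ∧
    (∀ x y, x ∈ Lw τ j → y ∈ Lw τ j → x ≠ y → Ω τ j x y ∨ Ω τ j y x)

/-- A witness is simple if it orders the writes to each location by index order. -/
def IsSimple (Ω : MTrace → ℕ → ℕ → ℕ → Prop) : Prop :=
  ∀ τ j x y, Ω τ j x y ↔ (x ∈ Lw τ j ∧ y ∈ Lw τ j ∧ x < y)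

/-- ⟨x,y⟩ ∈ Ω^e(τ,j): the extension of the witness order to all events to location j. -/
def OmegaE (Ω : MTrace → ℕ → ℕ → ℕ → Prop) (τ : MTrace) (j x y : ℕ) : Prop :=
  x ∈ Lset τ j ∧ y ∈ Lset τ j ∧
  (((ev τ x).data = (ev τ y).data ∧ (ev τ x).op = MemOp.W ∧ (ev τ y).op = MemOp.R) ∨
   ((ev τ x).data = 0 ∧ (ev τ y).data ≠ 0) ∨
   (∃ a b, a ∈ Lw τ j ∧ b ∈ Lw τ j ∧ Ω τ j a b ∧
      (ev τ a).data = (ev τ x).data ∧ (ev τ b).data = (ev τ y).data))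

/-- Edge of the constraint graph G(Ω)(τ): union of the M(τ,i) and the Ω^e(τ,j). -/
def GEdge (Ω : MTrace → ℕ → ℕ → ℕ → Prop) (τ : MTrace) (x y : ℕ) : Prop :=
  (∃ i, Mrel τ i x y) ∨ (∃ j, OmegaE Ω τ j x y)

/-- The constraint graph G(Ω)(τ) has a cycle. -/
def HasCycle (Ω : MTrace → ℕ → ℕ → ℕ → Prop) (τ : MTrace) : Prop :=
  ∃ x, Relation.TransGen (GEdge Ω τ) x x

/-- The constraint graph G(Ω)(τ) is acyclic. -/
def Acyclic (Ω : MTrace → ℕ → ℕ → ℕ → Prop) (τ : MTrace) : Prop :=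
  ¬ HasCycle Ω τ

/-- All events of the trace have processor in {1,…,n} and location in {1,…,m}. -/
def InRange (n m : ℕ) (τ : MTrace) : Prop :=
  ∀ e ∈ τ, 1 ≤ e.proc ∧ e.proc ≤ n ∧ 1 ≤ e.loc ∧ e.loc ≤ m

/-- All data values in the trace lie in {0,…,v}. -/
def DataBounded (v : ℕ) (τ : MTrace) : Prop := ∀ e ∈ τ, e.data ≤ v

/-- A memory system with n processors and m locations: for each v ≥ 1, a set S(n,m,v)
of traces whose processors, locations, and data values are in range. -/
structure MemSystem (n m : ℕ) : Type where
  S : ℕ → Set MTrace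
  wf : ∀ v, 1 ≤ v → ∀ τ ∈ S v, InRange n m τ ∧ DataBounded v τ

/-- S(n,m): the union of the S(n,m,v) over v ≥ 1. -/
def MemSystem.traces {n m : ℕ} (M : MemSystem n m) : Set MTrace :=
  {τ | ∃ v, 1 ≤ v ∧ τ ∈ M.S v}

/-- A renaming function λ with λ(j,0) = 0 for every location j. -/
def IsRenaming (lam : ℕ → ℕ → ℕ) : Prop := ∀ j, lam j 0 = 0

/-- λ^d: rename the data value of each event according to its location. -/
def renameD (lam : ℕ → ℕ → ℕ) (τ : MTrace) : MTrace :=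
  τ.map fun e => { e with data := lam e.loc e.data }

/-- The memory system is data independent: a trace is in S(n,m,v) iff it is obtained
from an unambiguous trace of S(n,m) by a renaming function with values in {0,…,v}. -/
def DataIndependent {n m : ℕ} (M : MemSystem n m) : Prop :=
  ∀ v, 1 ≤ v → ∀ τ, τ ∈ M.S v ↔
    ∃ τ' lam, τ' ∈ M.traces ∧ Unambiguous τ' ∧ IsRenaming lam ∧
      (∀ j d, lam j d ≤ v) ∧ τ = renameD lam τ'

/-- λ^p: rename the processor of each event. -/
def renameP (lam : ℕ → ℕ) (τ : MTrace) : MTrace :=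
  τ.map fun e => { e with proc := lam e.proc }

/-- λ^l: rename the location of each event. -/
def renameL (lam : ℕ → ℕ) (τ : MTrace) : MTrace :=
  τ.map fun e => { e with loc := lam e.loc }

/-- λ is a permutation of {1,…,n}. -/
def PermOn (n : ℕ) (lam : ℕ → ℕ) : Prop :=
  Set.BijOn lam (Set.Icc 1 n) (Set.Icc 1 n)

/-- The memory system is processor symmetric. -/
def ProcSymmetric {n m : ℕ} (M : MemSystem n m) : Prop :=
  ∀ lam, PermOn n lam → ∀ v τ, τ ∈ M.S v → renameP lam τ ∈ M.S v

/-- The memory system is location symmetric. -/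
def LocSymmetric {n m : ℕ} (M : MemSystem n m) : Prop :=
  ∀ lam, PermOn m lam → ∀ v τ, τ ∈ M.S v → renameL lam τ ∈ M.S v

/-- x ⊕ 1 in the cyclic group {1,…,k} with identity k. -/
def cyc (k x : ℕ) : ℕ := if x = k then 1 else x + 1

/-- A k-nice cycle u_1,v_1,…,u_k,v_k in G(Ω)(τ): distinct vertices; each ⟨u_x,v_x⟩
is a processor edge, each ⟨v_x,u_{x⊕1}⟩ a location edge; no processor (resp.
location) contributes two edges. -/
def NiceCycle (Ω : MTrace → ℕ → ℕ → ℕ → Prop) (τ : MTrace) (k : ℕ)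
    (u v : ℕ → ℕ) : Prop :=
  1 ≤ k ∧
  (∀ x ∈ Set.Icc 1 k, ∀ y ∈ Set.Icc 1 k, x ≠ y → u x ≠ u y) ∧
  (∀ x ∈ Set.Icc 1 k, ∀ y ∈ Set.Icc 1 k, x ≠ y → v x ≠ v y) ∧
  (∀ x ∈ Set.Icc 1 k, ∀ y ∈ Set.Icc 1 k, u x ≠ v y) ∧
  (∀ x ∈ Set.Icc 1 k, ∃ i, Mrel τ i (u x) (v x)) ∧
  (∀ x ∈ Set.Icc 1 k, ∃ j, OmegaE Ω τ j (v x) (u (cyc k x))) ∧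
  (∀ x ∈ Set.Icc 1 k, ∀ y ∈ Set.Icc 1 k, x ≠ y → ∀ i,
     Mrel τ i (u x) (v x) → ¬ Mrel τ i (u y) (v y)) ∧
  (∀ x ∈ Set.Icc 1 k, ∀ y ∈ Set.Icc 1 k, x ≠ y → ∀ j,
     OmegaE Ω τ j (v x) (u (cyc k x)) → ¬ OmegaE Ω τ j (v y) (u (cyc k y)))

/-- A canonical k-nice cycle: a k-nice cycle whose processor edges are in M(τ,x) and
whose location edges are in Ω^e(τ,x⊕1), for x = 1,…,k. -/
def CanonicalNiceCycle (Ω : MTrace → ℕ → ℕ → ℕ → Prop) (τ : MTrace) (k : ℕ)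
    (u v : ℕ → ℕ) : Prop :=
  NiceCycle Ω τ k u v ∧
  (∀ x ∈ Set.Icc 1 k, Mrel τ x (u x) (v x)) ∧
  (∀ x ∈ Set.Icc 1 k, OmegaE Ω τ (cyc k x) (v x) (u (cyc k x)))

/-- The trace satisfies the automaton Constrain_k(j). -/
def ConstrainK (k j : ℕ) (τ : MTrace) : Prop :=
  (j ≤ k →
    (∀ x ∈ Lw τ j, (ev τ x).data ≤ 2) ∧
    (∀ x ∈ Lw τ j, ∀ y ∈ Lw τ j, (ev τ x).data = 1 → (ev τ y).data = 1 → x = y) ∧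
    (∀ x ∈ Lw τ j, ∀ y ∈ Lw τ j, (ev τ x).data = 0 → (ev τ y).data ≠ 0 → x < y) ∧
    (∀ y ∈ Lw τ j, (ev τ y).data = 2 → ∃ x ∈ Lw τ j, (ev τ x).data = 1 ∧ x < y)) ∧
  (k < j → ∀ x ∈ Lw τ j, (ev τ x).data = 0)

/-- The trace satisfies the automaton Check_k(i). -/
def CheckK (k i : ℕ) (τ : MTrace) : Prop :=
  ∃ x ∈ Dom τ, ∃ y ∈ Dom τ, x < y ∧
    (ev τ x).proc = i ∧ (ev τ x).loc = i ∧
    ((ev τ x).data = 1 ∨ (ev τ x).data = 2) ∧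
    (ev τ y).proc = i ∧ (ev τ y).loc = cyc k i ∧
    ((ev τ y).data = 0 ∨ ((ev τ y).op = MemOp.W ∧ (ev τ y).data = 1))

/-! A data renaming fixes 0 and acts on the values of each location by one function, and it
leaves operations, processors and locations untouched. Hence it maps serial sequences to serial
sequences, and any permutation witnessing sequential consistency of a trace also witnesses it for
each of its renamings. By data independence every trace is a renaming of an unambiguous one. -/

def MemEvent.renameData (lam : ℕ → ℕ → ℕ) (e : MemEvent) : MemEvent :=
  { e with data := lam e.loc e.data }

namespace MemEvent

variable (lam : ℕ → ℕ → ℕ) (e : MemEvent)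

@[simp] lemma renameData_op : (e.renameData lam).op = e.op := rfl

@[simp] lemma renameData_proc : (e.renameData lam).proc = e.proc := rfl

@[simp] lemma renameData_loc : (e.renameData lam).loc = e.loc := rfl

@[simp] lemma renameData_data : (e.renameData lam).data = lam e.loc e.data := rfl

end MemEvent

section Renaming

variable {lam : ℕ → ℕ → ℕ}

lemma renameD_eq_map (lam : ℕ → ℕ → ℕ) (τ : MTrace) :
    renameD lam τ = τ.map (MemEvent.renameData lam) := rfl

@[simp] lemma length_renameD (lam : ℕ → ℕ → ℕ) (τ : MTrace) :
    (renameD lam τ).length = τ.length :=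
  List.length_map _

@[simp] lemma dom_renameD (lam : ℕ → ℕ → ℕ) (τ : MTrace) : Dom (renameD lam τ) = Dom τ := by
  simp [Dom]

/-- Out of range, `ev` returns the default event, whose data value 0 a renaming fixes. -/
lemma ev_renameD (hlam : IsRenaming lam) (τ : MTrace) (x : ℕ) :
    ev (renameD lam τ) x = (ev τ x).renameData lam := by
  have hdefault : (default : MemEvent).renameData lam = default := by
    simp only [MemEvent.renameData, default, hlam 1]
  rw [ev, ev, renameD_eq_map, ← List.getD_map τ default (MemEvent.renameData lam), hdefault]

lemma mrel_renameD (hlam : IsRenaming lam) (τ : MTrace) (i x y : ℕ) :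
    Mrel (renameD lam τ) i x y ↔ Mrel τ i x y := by
  simp [Mrel, Pset, ev_renameD hlam]

lemma SerialFn.renameData (hlam : IsRenaming lam) {len : ℕ} {e : ℕ → MemEvent}
    (he : SerialFn len e) : SerialFn len fun x => (e x).renameData lam := by
  intro u hu hulen
  obtain ⟨hinit, hlatest⟩ := he u hu hulen
  simp only [MemEvent.renameData_op, MemEvent.renameData_loc, MemEvent.renameData_data]
  refine ⟨fun hnone => by rw [hinit hnone, hlam], fun k hk hku hW hloc hlast => ?_⟩
  rw [hlatest k hk hku hW hloc hlast, hloc]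

lemma IsSCWitness.renameD (hlam : IsRenaming lam) {τ : MTrace} {f g : ℕ → ℕ}
    (h : IsSCWitness τ f g) : IsSCWitness (renameD lam τ) f g := by
  obtain ⟨hf, hg, hgf, hfg, hM, hS⟩ := h
  refine ⟨?_, ?_, ?_, ?_, fun i u v huv => hM i u v ((mrel_renameD hlam τ i u v).1 huv), ?_⟩
  all_goals simp only [dom_renameD, length_renameD, ev_renameD hlam]
  exacts [hf, hg, hgf, hfg, hS.renameData hlam]

lemma SeqConsistent.renameD (hlam : IsRenaming lam) {τ : MTrace} (h : SeqConsistent τ) :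
    SeqConsistent (renameD lam τ) :=
  let ⟨f, g, hfg⟩ := h
  ⟨f, g, hfg.renameD hlam⟩

end Renaming

lemma DataIndependent.exists_unambiguous_renameD {n m : ℕ} {M : MemSystem n m}
    (hDI : DataIndependent M) {τ : MTrace} (hτ : τ ∈ M.traces) :
    ∃ τ' ∈ M.traces, Unambiguous τ' ∧ ∃ lam, IsRenaming lam ∧ τ = renameD lam τ' := by
  obtain ⟨v, hv, hτv⟩ := hτ
  obtain ⟨τ', lam, hτ', hunamb, hlam, -, rfl⟩ := (hDI v hv τ).1 hτv
  exact ⟨τ', hτ', hunamb, lam, hlam, rfl⟩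

theorem every_trace_sc_iff_every_unambiguous_trace_sc_general
    (n m : ℕ)
    (M : MemSystem n m) (hDI : DataIndependent M) :
    (∀ τ ∈ M.traces, SeqConsistent τ) ↔
      (∀ τ ∈ M.traces, Unambiguous τ → SeqConsistent τ) := by
  refine ⟨fun h τ hτ _ => h τ hτ, fun h τ hτ => ?_⟩
  obtain ⟨τ', hτ', hunamb, lam, hlam, rfl⟩ := hDI.exists_unambiguous_renameD hτ
  exact (h τ' hτ' hunamb).renameD hlam

/-- For a data independent memory system, every trace of S(n,m) is
sequentially consistent iff every unambiguous trace of S(n,m) is. -/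
theorem every_trace_sc_iff_every_unambiguous_trace_sc
    (n m : ℕ) (hn : 1 ≤ n) (hm : 1 ≤ m)
    (M : MemSystem n m) (hDI : DataIndependent M) :
    (∀ τ ∈ M.traces, SeqConsistent τ) ↔
      (∀ τ ∈ M.traces, Unambiguous τ → SeqConsistent τ) :=
  every_trace_sc_iff_every_unambiguous_trace_sc_general n m M hDI
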